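/- Let H(t) be a continuous family of self-adjoint elements of a C*-algebra and suppose P(t) solves the ordinary differential equation i P′(t) = [H(t), P(t)] with P(0)² = P(0) and P(0)* = P(0). Then P(t)² = P(t) and P(t)* = P(t) for all t. -/

import Mathlib

/-!
Both `P² - P` and `P* - P` satisfy the Heisenberg equation `i Q' = [H, Q]` again (for the
adjoint this uses `H* = H`). Since `‖[H, Q]‖ ≤ 2‖H‖‖Q‖` and `H` is bounded on compact time
intervals, Grönwall's inequality forces a solution vanishing at `t = 0` to vanish identically.
-/

open Complex Set

section Gronwall

variable {E : Type*} [NormedAddCommGroup E] [NormedSpace ℝ E] {f f' : ℝ → E} {K : ℝ → ℝ}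

theorem eq_zero_of_norm_deriv_le_of_le (hK : Continuous K) (hf : ∀ t, HasDerivAt f (f' t) t)
    (bound : ∀ t, ‖f' t‖ ≤ K t * ‖f t‖) {a t : ℝ} (ha : f a = 0) (hat : a ≤ t) : f t = 0 := by
  obtain ⟨C, hC⟩ := isCompact_Icc.exists_bound_of_continuousOn (hK.continuousOn (s := Icc a t))
  refine eq_zero_of_abs_deriv_le_mul_abs_self_of_eq_zero_right (K := C)
    (fun x _ => (hf x).continuousAt.continuousWithinAt) (fun x _ => (hf x).hasDerivWithinAt) ha
    (fun x hx => ?_) t ⟨hat, le_rfl⟩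
  calc ‖f' x‖ ≤ K x * ‖f x‖ := bound x
    _ ≤ C * ‖f x‖ := by
      gcongr
      exact (Real.le_norm_self _).trans (hC x (Ico_subset_Icc_self hx))

theorem eq_zero_of_norm_deriv_le (hK : Continuous K) (hf : ∀ t, HasDerivAt f (f' t) t)
    (bound : ∀ t, ‖f' t‖ ≤ K t * ‖f t‖) {a : ℝ} (ha : f a = 0) (t : ℝ) : f t = 0 := by
  rcases le_total a t with hat | hta
  · exact eq_zero_of_norm_deriv_le_of_le hK hf bound ha hat
  · have hf_neg (s : ℝ) : HasDerivAt (fun x => f (-x)) (-f' (-s)) s := by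
      simpa [Function.comp_def] using (hf (-s)).scomp s (hasDerivAt_neg s)
    simpa using eq_zero_of_norm_deriv_le_of_le (hK.comp continuous_neg) hf_neg
      (fun s => by simpa using bound (-s)) (by simpa using ha) (neg_le_neg hta)

end Gronwall

theorem norm_mul_sub_mul_le {A : Type*} [NormedRing A] (a b : A) :
    ‖a * b - b * a‖ ≤ 2 * ‖a‖ * ‖b‖ :=
  calc ‖a * b - b * a‖ ≤ ‖a * b‖ + ‖b * a‖ := norm_sub_le _ _
    _ ≤ ‖a‖ * ‖b‖ + ‖b‖ * ‖a‖ := add_le_add (norm_mul_le _ _) (norm_mul_le _ _)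
    _ = 2 * ‖a‖ * ‖b‖ := by ring

theorem eq_zero_of_I_smul_deriv_eq_commutator {A : Type*} [NormedRing A] [NormedAlgebra ℂ A]
    {H Q Q' : ℝ → A} (hH : Continuous H) (hQ : ∀ t, HasDerivAt Q (Q' t) t)
    (hode : ∀ t, I • Q' t = H t * Q t - Q t * H t) {a : ℝ} (ha : Q a = 0) (t : ℝ) : Q t = 0 := by
  refine eq_zero_of_norm_deriv_le (K := fun s => 2 * ‖H s‖) (continuous_const.mul hH.norm) hQ
    (fun s => ?_) ha t
  calc ‖Q' s‖ = ‖I • Q' s‖ := by rw [norm_smul, norm_I, one_mul]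
    _ ≤ 2 * ‖H s‖ * ‖Q s‖ := hode s ▸ norm_mul_sub_mul_le _ _

theorem smul_deriv_mul_self_sub_eq_commutator {R A : Type*} [CommRing R] [Ring A] [Algebra R A]
    {c : R} {h p p' : A} (hp : c • p' = h * p - p * h) :
    c • (p' * p + p * p' - p') = h * (p * p - p) - (p * p - p) * h := by
  rw [smul_sub, smul_add, ← smul_mul_assoc, ← mul_smul_comm, hp]
  noncomm_ring

theorem I_smul_deriv_star_sub_eq_commutator {A : Type*} [Ring A] [StarRing A] [Module ℂ A]
    [StarModule ℂ A] {h p p' : A} (hh : star h = h) (hp : I • p' = h * p - p * h) :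
    I • (star p' - p') = h * (star p - p) - (star p - p) * h := by
  have hstar : I • star p' = -star (I • p') := by simp [star_smul]
  rw [smul_sub, hstar, hp, star_sub, star_mul, star_mul, hh]
  noncomm_ring

theorem stmt12_general {A : Type*} [NormedRing A] [StarRing A] [CStarRing A]
    [NormedAlgebra ℂ A] [StarModule ℂ A]
    (Hm P P' : ℝ → A)
    (hHcont : Continuous Hm) (hHsa : ∀ t, star (Hm t) = Hm t)
    (hderiv : ∀ t, HasDerivAt P (P' t) t)
    (hode : ∀ t, Complex.I • P' t = Hm t * P t - P t * Hm t)
    (h0idem : P 0 * P 0 = P 0) (h0sa : star (P 0) = P 0) :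
    ∀ t, P t * P t = P t ∧ star (P t) = P t := by
  have hidem : ∀ t, P t * P t - P t = 0 :=
    eq_zero_of_I_smul_deriv_eq_commutator hHcont
      (fun t => ((hderiv t).mul (hderiv t)).sub (hderiv t))
      (fun t => smul_deriv_mul_self_sub_eq_commutator (hode t)) (sub_eq_zero.2 h0idem)
  have hsa : ∀ t, star (P t) - P t = 0 :=
    eq_zero_of_I_smul_deriv_eq_commutator hHcont (fun t => (hderiv t).star.sub (hderiv t))
      (fun t => I_smul_deriv_star_sub_eq_commutator (hHsa t) (hode t)) (sub_eq_zero.2 h0sa)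
  exact fun t => ⟨sub_eq_zero.1 (hidem t), sub_eq_zero.1 (hsa t)⟩

/-- solutions of iP′ = [H, P] with idempotent self-adjoint initial condition
remain idempotent and self-adjoint for all times. -/
theorem stmt12 {A : Type*} [NormedRing A] [StarRing A] [CStarRing A]
    [NormedAlgebra ℂ A] [CompleteSpace A] [StarModule ℂ A]
    (Hm P P' : ℝ → A)
    (hHcont : Continuous Hm) (hHsa : ∀ t, star (Hm t) = Hm t)
    (hderiv : ∀ t, HasDerivAt P (P' t) t)
    (hode : ∀ t, Complex.I • P' t = Hm t * P t - P t * Hm t)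
    (h0idem : P 0 * P 0 = P 0) (h0sa : star (P 0) = P 0) :
    ∀ t, P t * P t = P t ∧ star (P t) = P t :=
  stmt12_general Hm P P' hHcont hHsa hderiv hode h0idem h0sa
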